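/- Fix a Gamma random variable W with shape κ > 0 and scale τ > 0, constants ρ, β, d > 0, α > 0, and a rate threshold R > 0. Define C(s) = E[log₂(1 + ρβ²·d^{−α}·s^{−α}·W)] for s > 0. Then there exists a unique s* > 0 such that C(s) > R if and only if s < s*. -/

import Mathlib

/-!
The capacity `C(a) = E[log₂(1 + a W)]`, as a function of the received SNR `a > 0`, is continuous
(dominated convergence, using `log₂(1 + x) ≤ x / log 2` and `E[W] < ∞`), strictly increasing,
tends to `0` as `a → 0` and is unbounded as `a → ∞`. The SNR `ρβ²d^{-α}s^{-α}` is a continuous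
strictly decreasing bijection of `(0, ∞)` in the distance `s`, so `s ↦ C(s)` crosses the level `R`
exactly once, at `s*`, by the intermediate value theorem.
-/

open MeasureTheory Real

/-- Density of the Gamma distribution with shape `κ` and scale `τ`. -/
noncomputable def gammaScalePdf (κ τ w : ℝ) : ℝ :=
  w ^ (κ - 1) * Real.exp (-w / τ) / (Real.Gamma κ * τ ^ κ)

open Set

theorem setIntegral_pos_of_forall_pos {X : Type*} [MeasurableSpace X] {μ : Measure X}
    {s : Set X} {g : X → ℝ} (hs : MeasurableSet s) (hμs : μ s ≠ 0) (hg : IntegrableOn g s μ)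
    (hpos : ∀ x ∈ s, 0 < g x) : 0 < ∫ x in s, g x ∂μ := by
  rw [setIntegral_pos_iff_support_of_nonneg_ae
    (ae_restrict_of_forall_mem hs fun x hx => (hpos x hx).le) hg,
    (inter_eq_right (s := Function.support g)).2 fun x hx => (hpos x hx).ne']
  exact pos_iff_ne_zero.2 hμs

theorem existsUnique_pos_threshold_of_strictAntiOn {G : ℝ → ℝ} {R : ℝ}
    (hG : StrictAntiOn G (Ioi 0)) (hGc : ContinuousOn G (Ioi 0))
    (hgt : ∃ t > 0, R < G t) (hlt : ∃ t > 0, G t < R) :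
    ∃! s : ℝ, 0 < s ∧ ∀ t : ℝ, 0 < t → (G t > R ↔ t < s) := by
  obtain ⟨t₁, ht₁, hR₁⟩ := hgt
  obtain ⟨t₂, ht₂, hR₂⟩ := hlt
  have ht₁₂ : t₁ ≤ t₂ := by
    by_contra! h
    linarith [hG ht₂ ht₁ h]
  obtain ⟨s, hs, hGs⟩ := intermediate_value_Icc' ht₁₂
    (hGc.mono fun x hx => ht₁.trans_le hx.1) ⟨hR₂.le, hR₁.le⟩
  have hs₀ : 0 < s := ht₁.trans_le hs.1
  have hthreshold : ∀ t : ℝ, 0 < t → (G t > R ↔ t < s) := fun t ht => by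
    rw [gt_iff_lt, ← hGs]
    exact hG.lt_iff_gt hs₀ ht
  refine ⟨s, ⟨hs₀, hthreshold⟩, fun s' ⟨hs'₀, hs'⟩ => le_antisymm ?_ ?_⟩
  · by_contra! h
    exact lt_irrefl R (hGs ▸ (hs' s hs₀).2 h)
  · by_contra! h
    exact lt_irrefl s' ((hs' s' hs'₀).1 ((hthreshold s' hs'₀).2 h))

theorem logb_one_add_le {b x : ℝ} (hb : 1 < b) (hx : 0 ≤ x) : logb b (1 + x) ≤ x / log b :=
  div_le_div_of_nonneg_right (by linarith [log_le_sub_one_of_pos (by linarith : 0 < 1 + x)])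
    (log_pos hb).le

/-- The ergodic capacity `E[log₂(1 + a W)]` at SNR `a` of a fading gain `W` with density `f`
on `(0, ∞)`. -/
noncomputable def ergodicCapacity (f : ℝ → ℝ) (a : ℝ) : ℝ :=
  ∫ w in Ioi (0 : ℝ), logb 2 (1 + a * w) * f w

section ErgodicCapacity

variable {f : ℝ → ℝ} {a : ℝ}

theorem norm_logb_one_add_mul_mul_le {w y : ℝ} (ha : 0 ≤ a) (hw : 0 ≤ w) (hy : 0 ≤ y) :
    ‖logb 2 (1 + a * w) * y‖ ≤ a / log 2 * (w * y) := by
  have hlog : 0 ≤ logb 2 (1 + a * w) := logb_nonneg one_lt_two (by nlinarith)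
  rw [Real.norm_eq_abs, abs_of_nonneg (mul_nonneg hlog hy)]
  calc logb 2 (1 + a * w) * y ≤ a * w / log 2 * y :=
        mul_le_mul_of_nonneg_right (logb_one_add_le one_lt_two (mul_nonneg ha hw)) hy
    _ = a / log 2 * (w * y) := by ring

theorem aestronglyMeasurable_logb_one_add_mul_mul {μ : Measure ℝ}
    (hf : AEStronglyMeasurable f μ) (a : ℝ) :
    AEStronglyMeasurable (fun w => logb 2 (1 + a * w) * f w) μ :=
  (Measurable.aestronglyMeasurable (by unfold logb; fun_prop)).mul hf

theorem integrableOn_logb_one_add_mul_mul (hf_pos : ∀ w ∈ Ioi (0 : ℝ), 0 < f w)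
    (hf_int : IntegrableOn f (Ioi 0)) (hf_mean : IntegrableOn (fun w => w * f w) (Ioi 0))
    (ha : 0 ≤ a) : IntegrableOn (fun w => logb 2 (1 + a * w) * f w) (Ioi 0) :=
  (hf_mean.const_mul (a / log 2)).mono'
    (aestronglyMeasurable_logb_one_add_mul_mul hf_int.aestronglyMeasurable a)
    (ae_restrict_of_forall_mem measurableSet_Ioi fun w hw =>
      norm_logb_one_add_mul_mul_le ha (le_of_lt hw) (hf_pos w hw).le)

theorem ergodicCapacity_le_mul_mean (hf_pos : ∀ w ∈ Ioi (0 : ℝ), 0 < f w)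
    (hf_int : IntegrableOn f (Ioi 0)) (hf_mean : IntegrableOn (fun w => w * f w) (Ioi 0))
    (ha : 0 ≤ a) : ergodicCapacity f a ≤ a / log 2 * ∫ w in Ioi (0 : ℝ), w * f w := by
  rw [← integral_const_mul]
  refine setIntegral_mono_on (integrableOn_logb_one_add_mul_mul hf_pos hf_int hf_mean ha)
    (hf_mean.const_mul _) measurableSet_Ioi fun w hw => ?_
  exact (Real.le_norm_self _).trans
    (norm_logb_one_add_mul_mul_le ha (le_of_lt hw) (hf_pos w hw).le)

theorem exists_pos_ergodicCapacity_lt (hf_pos : ∀ w ∈ Ioi (0 : ℝ), 0 < f w)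
    (hf_int : IntegrableOn f (Ioi 0)) (hf_mean : IntegrableOn (fun w => w * f w) (Ioi 0))
    {R : ℝ} (hR : 0 < R) : ∃ a > 0, ergodicCapacity f a < R := by
  set M := ∫ w in Ioi (0 : ℝ), w * f w
  have hM : 0 ≤ M := setIntegral_nonneg measurableSet_Ioi fun w hw =>
    mul_nonneg (le_of_lt hw) (hf_pos w hw).le
  have hlog : 0 < log 2 := log_pos one_lt_two
  refine ⟨R * log 2 / (M + 1), by positivity, ?_⟩
  calc ergodicCapacity f (R * log 2 / (M + 1))
      ≤ R * log 2 / (M + 1) / log 2 * M :=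
        ergodicCapacity_le_mul_mean hf_pos hf_int hf_mean (by positivity)
    _ = R * (M / (M + 1)) := by field_simp
    _ < R * 1 := mul_lt_mul_of_pos_left ((div_lt_one (by linarith)).2 (by linarith)) hR
    _ = R := mul_one R

theorem strictMonoOn_ergodicCapacity (hf_pos : ∀ w ∈ Ioi (0 : ℝ), 0 < f w)
    (hf_int : IntegrableOn f (Ioi 0)) (hf_mean : IntegrableOn (fun w => w * f w) (Ioi 0)) :
    StrictMonoOn (ergodicCapacity f) (Ici 0) := by
  intro a ha b hb hab
  have ha_int := integrableOn_logb_one_add_mul_mul hf_pos hf_int hf_mean ha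
  have hb_int := integrableOn_logb_one_add_mul_mul hf_pos hf_int hf_mean hb
  rw [← sub_pos, ergodicCapacity, ergodicCapacity, ← integral_sub hb_int ha_int]
  exact setIntegral_pos_of_forall_pos measurableSet_Ioi (by simp) (hb_int.sub ha_int)
    fun w (hw : 0 < w) => sub_pos.2 <| mul_lt_mul_of_pos_right
      (logb_lt_logb one_lt_two (by nlinarith [mem_Ici.1 ha]) (by nlinarith)) (hf_pos w hw)

theorem continuousOn_ergodicCapacity (hf_pos : ∀ w ∈ Ioi (0 : ℝ), 0 < f w)
    (hf_int : IntegrableOn f (Ioi 0)) (hf_mean : IntegrableOn (fun w => w * f w) (Ioi 0)) :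
    ContinuousOn (ergodicCapacity f) (Ioi 0) := by
  intro a₀ (ha₀ : 0 < a₀)
  refine ContinuousAt.continuousWithinAt <| continuousAt_of_dominated
    (bound := fun w => (a₀ + 1) / log 2 * (w * f w))
    (.of_forall fun a => aestronglyMeasurable_logb_one_add_mul_mul hf_int.aestronglyMeasurable a)
    ?_ (hf_mean.const_mul _) (ae_restrict_of_forall_mem measurableSet_Ioi fun w (hw : 0 < w) =>
      ((continuousAt_logb (by nlinarith)).comp (by fun_prop)).mul continuousAt_const)
  filter_upwards [Ioo_mem_nhds ha₀ (lt_add_one a₀)] with a ha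
  refine ae_restrict_of_forall_mem measurableSet_Ioi fun w (hw : 0 < w) => ?_
  exact (norm_logb_one_add_mul_mul_le ha.1.le hw.le (hf_pos w hw).le).trans <|
    mul_le_mul_of_nonneg_right (div_le_div_of_nonneg_right ha.2.le (log_pos one_lt_two).le)
      (mul_nonneg hw.le (hf_pos w hw).le)

theorem logb_one_add_mul_setIntegral_Ici_one_le (hf_pos : ∀ w ∈ Ioi (0 : ℝ), 0 < f w)
    (hf_int : IntegrableOn f (Ioi 0)) (hf_mean : IntegrableOn (fun w => w * f w) (Ioi 0))
    (ha : 0 ≤ a) : logb 2 (1 + a) * ∫ w in Ici (1 : ℝ), f w ≤ ergodicCapacity f a := by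
  have hsub : Ici (1 : ℝ) ⊆ Ioi 0 := fun w (hw : 1 ≤ w) => zero_lt_one.trans_le hw
  have ha_int := integrableOn_logb_one_add_mul_mul hf_pos hf_int hf_mean ha
  rw [← integral_const_mul]
  calc ∫ w in Ici (1 : ℝ), logb 2 (1 + a) * f w
      ≤ ∫ w in Ici (1 : ℝ), logb 2 (1 + a * w) * f w :=
        setIntegral_mono_on ((hf_int.mono_set hsub).const_mul _) (ha_int.mono_set hsub)
          measurableSet_Ici fun w (hw : 1 ≤ w) => mul_le_mul_of_nonneg_right
            (logb_le_logb_of_le one_lt_two (by linarith) (by nlinarith)) (hf_pos w (hsub hw)).le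
    _ ≤ ergodicCapacity f a :=
        setIntegral_mono_set ha_int (ae_restrict_of_forall_mem measurableSet_Ioi
          fun w (hw : 0 < w) => mul_nonneg (logb_nonneg one_lt_two (by nlinarith))
            (hf_pos w hw).le) hsub.eventuallyLE

theorem exists_lt_ergodicCapacity (hf_pos : ∀ w ∈ Ioi (0 : ℝ), 0 < f w)
    (hf_int : IntegrableOn f (Ioi 0)) (hf_mean : IntegrableOn (fun w => w * f w) (Ioi 0))
    (R : ℝ) : ∃ a > 0, R < ergodicCapacity f a := by
  set P := ∫ w in Ici (1 : ℝ), f w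
  have hP : 0 < P := setIntegral_pos_of_forall_pos measurableSet_Ici (by simp)
    (hf_int.mono_set fun w (hw : 1 ≤ w) => zero_lt_one.trans_le hw)
    fun w (hw : 1 ≤ w) => hf_pos w (zero_lt_one.trans_le hw)
  have ha : (0 : ℝ) < 2 ^ (R / P) := rpow_pos_of_pos two_pos _
  refine ⟨2 ^ (R / P), ha, ?_⟩
  have hlogb : R / P < logb 2 (1 + 2 ^ (R / P)) := by
    conv_lhs => rw [← logb_rpow (b := 2) (x := R / P) two_pos (by norm_num)]
    exact logb_lt_logb one_lt_two ha (by linarith)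
  calc R < logb 2 (1 + 2 ^ (R / P)) * P := (div_lt_iff₀ hP).1 hlogb
    _ ≤ ergodicCapacity f (2 ^ (R / P)) :=
      logb_one_add_mul_setIntegral_Ici_one_le hf_pos hf_int hf_mean ha.le

end ErgodicCapacity

section PathLoss

variable {c α : ℝ}

theorem mapsTo_mul_rpow_neg (hc : 0 < c) :
    MapsTo (fun t : ℝ => c * t ^ (-α)) (Ioi 0) (Ioi 0) :=
  fun _ ht => mul_pos hc (rpow_pos_of_pos ht _)

theorem strictAntiOn_mul_rpow_neg (hc : 0 < c) (hα : 0 < α) :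
    StrictAntiOn (fun t : ℝ => c * t ^ (-α)) (Ioi 0) :=
  fun _ hx _ _ hxy => mul_lt_mul_of_pos_left (rpow_lt_rpow_of_neg hx hxy (neg_neg_of_pos hα)) hc

theorem continuousOn_mul_rpow_neg : ContinuousOn (fun t : ℝ => c * t ^ (-α)) (Ioi 0) :=
  continuousOn_const.mul (continuousOn_id.rpow_const fun _ ht => Or.inl (ne_of_gt ht))

theorem surjOn_mul_rpow_neg (hc : 0 < c) (hα : α ≠ 0) :
    SurjOn (fun t : ℝ => c * t ^ (-α)) (Ioi 0) (Ioi 0) := by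
  intro a (ha : 0 < a)
  refine ⟨(c / a) ^ α⁻¹, rpow_pos_of_pos (div_pos hc ha) _, ?_⟩
  simp only
  rw [← rpow_mul (div_pos hc ha).le, inv_mul_eq_div, neg_div, div_self hα, rpow_neg_one]
  field_simp

end PathLoss

section GammaDensity

variable {κ τ : ℝ}

theorem gammaScalePdf_pos (hκ : 0 < κ) (hτ : 0 < τ) {w : ℝ} (hw : 0 < w) :
    0 < gammaScalePdf κ τ w :=
  div_pos (mul_pos (rpow_pos_of_pos hw _) (exp_pos _))
    (mul_pos (Gamma_pos_of_pos hκ) (rpow_pos_of_pos hτ _))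

theorem integrableOn_rpow_mul_exp_neg_div (hτ : 0 < τ) {s : ℝ} (hs : -1 < s) :
    IntegrableOn (fun w => w ^ s * exp (-w / τ)) (Ioi 0) := by
  refine (integrableOn_rpow_mul_exp_neg_mul_rpow hs one_pos (inv_pos.2 hτ)).congr_fun
    (fun w _ => ?_) measurableSet_Ioi
  simp only [rpow_one, neg_mul, mul_neg, div_eq_inv_mul]

theorem integrableOn_gammaScalePdf (hκ : 0 < κ) (hτ : 0 < τ) :
    IntegrableOn (gammaScalePdf κ τ) (Ioi 0) :=
  (integrableOn_rpow_mul_exp_neg_div hτ (by linarith : (-1 : ℝ) < κ - 1)).div_const _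

theorem integrableOn_mul_gammaScalePdf (hκ : 0 < κ) (hτ : 0 < τ) :
    IntegrableOn (fun w => w * gammaScalePdf κ τ w) (Ioi 0) := by
  refine IntegrableOn.congr_fun ((integrableOn_rpow_mul_exp_neg_div hτ
    (by linarith : (-1 : ℝ) < κ)).div_const (Gamma κ * τ ^ κ)) (fun w (hw : 0 < w) => ?_)
    measurableSet_Ioi
  simp only [gammaScalePdf, rpow_sub_one hw.ne']
  field_simp

end GammaDensity

theorem coverage_region_is_interval (κ τ ρ β d α R : ℝ)
    (hκ : 0 < κ) (hτ : 0 < τ) (hρ : 0 < ρ) (hβ : 0 < β) (hd : 0 < d)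
    (hα : 0 < α) (hR : 0 < R) :
    ∃! s : ℝ, 0 < s ∧ ∀ t : ℝ, 0 < t →
      ((∫ w in Set.Ioi (0 : ℝ),
          Real.logb 2 (1 + ρ * β ^ 2 * d ^ (-α) * t ^ (-α) * w) *
            gammaScalePdf κ τ w) > R ↔ t < s) := by
  set c := ρ * β ^ 2 * d ^ (-α)
  have hc : 0 < c := mul_pos (mul_pos hρ (pow_pos hβ 2)) (rpow_pos_of_pos hd _)
  have hpos : ∀ w ∈ Ioi (0 : ℝ), 0 < gammaScalePdf κ τ w := fun _ => gammaScalePdf_pos hκ hτ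
  have hint := integrableOn_gammaScalePdf hκ hτ
  have hmean := integrableOn_mul_gammaScalePdf hκ hτ
  have hanti : StrictAntiOn (ergodicCapacity (gammaScalePdf κ τ) ∘ fun t => c * t ^ (-α))
      (Ioi 0) :=
    ((strictMonoOn_ergodicCapacity hpos hint hmean).mono Ioi_subset_Ici_self).comp_strictAntiOn
      (strictAntiOn_mul_rpow_neg hc hα) (mapsTo_mul_rpow_neg hc)
  have hcont := (continuousOn_ergodicCapacity hpos hint hmean).comp continuousOn_mul_rpow_neg
    (mapsTo_mul_rpow_neg (α := α) hc)
  obtain ⟨a₁, ha₁, hR₁⟩ := exists_lt_ergodicCapacity hpos hint hmean R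
  obtain ⟨a₂, ha₂, hR₂⟩ := exists_pos_ergodicCapacity_lt hpos hint hmean hR
  obtain ⟨t₁, ht₁, rfl⟩ := surjOn_mul_rpow_neg hc hα.ne' ha₁
  obtain ⟨t₂, ht₂, rfl⟩ := surjOn_mul_rpow_neg hc hα.ne' ha₂
  exact existsUnique_pos_threshold_of_strictAntiOn hanti hcont ⟨t₁, ht₁, hR₁⟩ ⟨t₂, ht₂, hR₂⟩
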